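/- For every integer n ≥ 2, let q be the maximal integer such that q(q−1)/2 ≤ n and q·⌈(q−1)/2⌉ ≤ n+1. Then the achromatic number of the path with n edges equals q: Ψ(P_n) = q. -/

import Mathlib

/-- The `n`-path `P_n`: vertices `{0, 1, …, n}`, adjacent iff they differ by 1. -/
def pathGraph (n : ℕ) : SimpleGraph (Fin (n + 1)) where
  Adj u v := (u : ℕ) + 1 = v ∨ (v : ℕ) + 1 = u
  symm := ⟨by rintro u v (h | h) <;> [exact Or.inr h; exact Or.inl h]⟩
  loopless := ⟨by rintro u (h | h) <;> omega⟩

/-- `c` is a `k`-complete coloring of `G`: every pair of distinct colors appears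
on some edge. -/
def IsCompleteColoring {V : Type*} (G : SimpleGraph V) (k : ℕ) (c : V → Fin k) : Prop :=
  ∀ i j : Fin k, i ≠ j → ∃ u v, G.Adj u v ∧ c u = i ∧ c v = j

/-- `c` is a `k`-complete proper coloring of `G`. -/
def IsCompleteProperColoring {V : Type*} (G : SimpleGraph V) (k : ℕ) (c : V → Fin k) : Prop :=
  IsCompleteColoring G k c ∧ ∀ u v, G.Adj u v → c u ≠ c v

/-- The complete coloring number `Γ(G)`: the maximum `k` admitting a
`k`-complete coloring. -/
noncomputable def completeColoringNumber {V : Type*} (G : SimpleGraph V) : ℕ :=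
  sSup {k | ∃ c : V → Fin k, IsCompleteColoring G k c}

/-- The achromatic number `Ψ(G)`: the maximum `k` admitting a `k`-complete
proper coloring. -/
noncomputable def achromaticNumber {V : Type*} (G : SimpleGraph V) : ℕ :=
  sSup {k | ∃ c : V → Fin k, IsCompleteProperColoring G k c}

/-
Upper bound: in a complete `k`-colouring of a graph, the `k.choose 2` colour pairs need distinct
edges, and a colour class meets the `k - 1` other classes through its neighbourhoods, so in a graph
of maximum degree `2` it has at least `⌈(k - 1) / 2⌉` vertices.

Lower bound: a complete proper `q`-colouring of a path is a walk in the complete graph `K_q` using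
every edge. For `q = 2m + 1` an Euler tour of `K_q` has `q.choose 2 + 1` vertices; for `q = 2m + 2`
an Euler tour of `K_{2m+1}` followed by a walk joining the last colour to all the others has
`q (m + 1)` vertices. Prepending colours different from the first one pads such a walk to any
greater length.
-/

open Finset

section UpperBound

variable {V : Type*} {G : SimpleGraph V} {k : ℕ} {c : V → Fin k}

theorem IsCompleteColoring.choose_two_le_card_edgeFinset [Fintype G.edgeSet]
    (hc : IsCompleteColoring G k c) : k.choose 2 ≤ #G.edgeFinset := by
  classical
  have hcover : (univ : Finset (Fin k)).offDiag.image (Function.uncurry Sym2.mk) ⊆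
      G.edgeFinset.image (Sym2.map c) := by
    simp only [subset_iff, mem_image, mem_offDiag, mem_univ, true_and, Prod.exists,
      Function.uncurry_apply_pair, forall_exists_index, and_imp]
    rintro _ i j hij rfl
    obtain ⟨u, v, huv, rfl, rfl⟩ := hc i j hij
    exact ⟨s(u, v), G.mem_edgeFinset.2 huv, rfl⟩
  calc k.choose 2 = #((univ : Finset (Fin k)).offDiag.image (Function.uncurry Sym2.mk)) := by
        rw [Sym2.card_image_offDiag, card_univ, Fintype.card_fin]
    _ ≤ #(G.edgeFinset.image (Sym2.map c)) := card_le_card hcover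
    _ ≤ #G.edgeFinset := card_image_le

theorem IsCompleteColoring.sub_one_le_mul_card_fiber [Fintype V] [DecidableRel G.Adj] {d : ℕ}
    (hc : IsCompleteColoring G k c) (hdeg : ∀ v, G.degree v ≤ d) (i : Fin k) :
    k - 1 ≤ d * #{v | c v = i} := by
  classical
  have hcover : ({i}ᶜ : Finset (Fin k)) ⊆
      ({v | c v = i} : Finset V).biUnion fun v ↦ (G.neighborFinset v).image c := by
    intro j hj
    obtain ⟨u, v, huv, hu, hv⟩ := hc i j (by simpa [eq_comm] using hj)
    simp only [mem_biUnion, mem_filter, mem_univ, true_and, mem_image,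
      SimpleGraph.mem_neighborFinset]
    exact ⟨u, hu, v, huv, hv⟩
  calc k - 1 = #({i}ᶜ : Finset (Fin k)) := by simp [card_compl]
    _ ≤ ∑ v ∈ {v | c v = i}, #((G.neighborFinset v).image c) :=
        (card_le_card hcover).trans card_biUnion_le
    _ ≤ ∑ v ∈ {v | c v = i}, d := sum_le_sum fun v _ ↦
        card_image_le.trans ((G.card_neighborFinset_eq_degree v).trans_le (hdeg v))
    _ = d * #{v | c v = i} := by rw [sum_const, smul_eq_mul, mul_comm]

theorem IsCompleteColoring.mul_ceilDiv_le_card [Fintype V] [DecidableRel G.Adj] {d : ℕ}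
    (hc : IsCompleteColoring G k c) (hdeg : ∀ v, G.degree v ≤ d) :
    k * ((k - 1) ⌈/⌉ d) ≤ Fintype.card V := by
  classical
  rcases d.eq_zero_or_pos with rfl | hd
  · simp
  calc k * ((k - 1) ⌈/⌉ d) = ∑ _i : Fin k, (k - 1) ⌈/⌉ d := by simp
    _ ≤ ∑ i : Fin k, #{v | c v = i} :=
        sum_le_sum fun i _ ↦ (ceilDiv_le_iff_le_mul hd).2 (hc.sub_one_le_mul_card_fiber hdeg i)
    _ = Fintype.card V := (card_eq_sum_card_fiberwise fun v _ ↦ mem_univ (c v)).symm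

end UpperBound

instance (n : ℕ) : DecidableRel (pathGraph n).Adj :=
  fun _ _ ↦ inferInstanceAs (Decidable (_ ∨ _))

theorem degree_pathGraph_le (n : ℕ) (v : Fin (n + 1)) : (pathGraph n).degree v ≤ 2 := by
  have hsub :
      ((pathGraph n).neighborFinset v).map Fin.valEmbedding ⊆ {(v : ℕ) - 1, (v : ℕ) + 1} := by
    intro x hx
    simp only [mem_map, SimpleGraph.mem_neighborFinset, Fin.valEmbedding_apply] at hx
    obtain ⟨u, huv | huv, rfl⟩ := hx <;> simp <;> omega
  rw [← SimpleGraph.card_neighborFinset_eq_degree, ← card_map Fin.valEmbedding]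
  exact (card_le_card hsub).trans card_le_two

theorem card_edgeFinset_pathGraph_le (n : ℕ) : #(pathGraph n).edgeFinset ≤ n := by
  have hsub : (pathGraph n).edgeFinset ⊆ univ.image fun i : Fin n ↦ s(i.castSucc, i.succ) := by
    intro e he
    induction e using Sym2.ind with | h u v => ?_
    rw [SimpleGraph.mem_edgeFinset, SimpleGraph.mem_edgeSet] at he
    rcases he with h | h
    · exact mem_image.2 ⟨⟨u, by omega⟩, mem_univ _, by simp [h]⟩
    · exact mem_image.2 ⟨⟨v, by omega⟩, mem_univ _, by simp [h]⟩
  calc #(pathGraph n).edgeFinset ≤ #(univ.image fun i : Fin n ↦ s(i.castSucc, i.succ)) :=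
        card_le_card hsub
    _ ≤ n := card_image_le.trans_eq (by simp)

section AdjIn

variable {α : Type*} {l l' s t : List α} {x y : α}

def AdjIn (l : List α) (x y : α) : Prop := [x, y] <:+: l ∨ [y, x] <:+: l

theorem AdjIn.symm (h : AdjIn l x y) : AdjIn l y x := Or.symm h

theorem AdjIn.mono (h : AdjIn l x y) (hl : l <:+: l') : AdjIn l' x y :=
  h.imp (·.trans hl) (·.trans hl)

theorem adjIn_of_eq_append (h : l = s ++ x :: y :: t) : AdjIn l x y :=
  Or.inl ⟨s, t, by simp [h]⟩

end AdjIn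

/-- The colours, read along a path, of a complete proper `q`-colouring of it. -/
structure IsCompleteProperList (q : ℕ) (l : List ℕ) : Prop where
  lt : ∀ x ∈ l, x < q
  isChain_ne : l.IsChain (· ≠ ·)
  adjIn : ∀ i j, i < j → j < q → AdjIn l i j

namespace IsCompleteProperList

variable {q : ℕ} {l : List ℕ}

theorem exists_cons (h : IsCompleteProperList q l) (hq : 2 ≤ q) :
    ∃ x, IsCompleteProperList q (x :: l) := by
  obtain ⟨x, hxq, hx⟩ : ∃ x < q, ∀ y ∈ l.head?, x ≠ y := by
    cases l.head? with
    | none => exact ⟨0, by omega, by simp⟩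
    | some y => exact ⟨if y = 0 then 1 else 0, by split <;> omega, by simp; split <;> omega⟩
  refine ⟨x, ⟨?_, List.isChain_cons.2 ⟨hx, h.isChain_ne⟩, fun i j hij hj ↦
    (h.adjIn i j hij hj).mono (List.suffix_cons x l).isInfix⟩⟩
  simpa [hxq] using h.lt

theorem exists_length_eq (h : IsCompleteProperList q l) (hq : 2 ≤ q) {N : ℕ}
    (hN : l.length ≤ N) : ∃ l', IsCompleteProperList q l' ∧ l'.length = N := by
  induction N, hN using Nat.le_induction with
  | base => exact ⟨l, h, rfl⟩
  | succ N _ ih =>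
    obtain ⟨l', hl', rfl⟩ := ih
    obtain ⟨x, hx⟩ := hl'.exists_cons hq
    exact ⟨x :: l', hx, rfl⟩

theorem exists_isCompleteProperColoring (h : IsCompleteProperList q l) {n : ℕ}
    (hl : l.length = n + 1) :
    ∃ c : Fin (n + 1) → Fin q, IsCompleteProperColoring (pathGraph n) q c := by
  let c : Fin (n + 1) → Fin q := fun v ↦ ⟨l[(v : ℕ)], h.lt _ (List.getElem_mem _)⟩
  have hpair : ∀ x y, [x, y] <:+: l →
      ∃ u v, (pathGraph n).Adj u v ∧ (c u : ℕ) = x ∧ (c v : ℕ) = y := by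
    rintro x y ⟨s, t, rfl⟩
    simp only [List.append_assoc, List.cons_append, List.nil_append, List.length_append,
      List.length_cons] at hl
    refine ⟨⟨s.length, by omega⟩, ⟨s.length + 1, by omega⟩, Or.inl rfl, ?_, ?_⟩ <;>
      simp [c]
  refine ⟨c, fun i j hij ↦ ?_, fun u v huv hc ↦ ?_⟩
  · have hadj : AdjIn l i j := (Fin.val_ne_of_ne hij).lt_or_gt.elim (h.adjIn _ _ · j.2)
      fun hji ↦ (h.adjIn _ _ hji i.2).symm
    rcases hadj with hij | hji
    · obtain ⟨u, v, huv, hu, hv⟩ := hpair _ _ hij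
      exact ⟨u, v, huv, Fin.ext hu, Fin.ext hv⟩
    · obtain ⟨u, v, huv, hu, hv⟩ := hpair _ _ hji
      exact ⟨v, u, huv.symm, Fin.ext hv, Fin.ext hu⟩
  · wlog huv' : (u : ℕ) + 1 = v generalizing u v
    · exact this v u huv.symm hc.symm (huv.resolve_left huv')
    exact h.isChain_ne.getElem u (by omega) (by simpa [c, Fin.ext_iff, ← huv'] using hc)

end IsCompleteProperList

def zigzag (a b : ℕ) : ℕ → List ℕ
  | 0 => [b]
  | j + 1 => zigzag a b j ++ [2 * j + 1, a, 2 * j + 2, b]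

@[simp] theorem head?_zigzag (a b j : ℕ) : (zigzag a b j).head? = some b := by
  induction j with
  | zero => rfl
  | succ j ih => simp [zigzag, ih]

@[simp] theorem getLast?_zigzag (a b j : ℕ) : (zigzag a b j).getLast? = some b := by
  cases j <;> simp [zigzag]

@[simp] theorem length_zigzag (a b j : ℕ) : (zigzag a b j).length = 4 * j + 1 := by
  induction j with
  | zero => rfl
  | succ j ih => simp [zigzag, ih]; ring

theorem lt_of_mem_zigzag {a b N j x : ℕ} (ha : a < N) (hb : b < N) (hj : 2 * j < N)
    (hx : x ∈ zigzag a b j) : x < N := by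
  induction j with
  | zero => simp_all [zigzag]
  | succ j ih =>
    simp only [zigzag, List.mem_append, List.mem_cons, List.not_mem_nil, or_false] at hx
    rcases hx with hx | rfl | rfl | rfl | rfl <;> first | exact ih (by omega) hx | omega

theorem isChain_zigzag {a b j : ℕ} (ha : 2 * j < a) (hb : 2 * j < b) :
    (zigzag a b j).IsChain (· ≠ ·) := by
  induction j with
  | zero => simp [zigzag]
  | succ j ih =>
    rw [zigzag, List.isChain_append]
    refine ⟨ih (by omega) (by omega), by simp; omega, by simp; omega⟩

theorem adjIn_zigzag {a b i j : ℕ} (hi : 1 ≤ i) (hij : i ≤ 2 * j) :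
    AdjIn (zigzag a b j) i a ∧ AdjIn (zigzag a b j) i b := by
  induction j with
  | zero => omega
  | succ j ih =>
    obtain ⟨s, hs⟩ := List.getLast?_eq_some_iff.1 (getLast?_zigzag a b j)
    obtain hij | rfl | rfl : i ≤ 2 * j ∨ i = 2 * j + 1 ∨ i = 2 * j + 2 := by omega
    · have hpre : zigzag a b j <:+: zigzag a b (j + 1) := (List.prefix_append _ _).isInfix
      exact ⟨(ih hij).1.mono hpre, (ih hij).2.mono hpre⟩
    · exact ⟨adjIn_of_eq_append (s := s ++ [b]) (t := [2 * j + 2, b]) (by simp [zigzag, hs]),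
        (adjIn_of_eq_append (s := s) (t := [a, 2 * j + 2, b]) (by simp [zigzag, hs])).symm⟩
    · exact ⟨(adjIn_of_eq_append (s := s ++ [b, 2 * j + 1]) (t := [b])
          (by simp [zigzag, hs])).symm,
        adjIn_of_eq_append (s := s ++ [b, 2 * j + 1, a]) (t := []) (by simp [zigzag, hs])⟩

/-- A closed walk from `a` around the triangles `a, 2i + 1, 2i + 2` of a windmill graph. -/
def windmill (a : ℕ) : ℕ → List ℕ
  | 0 => [a]
  | t + 1 => windmill a t ++ [2 * t + 1, 2 * t + 2, a]

@[simp] theorem head?_windmill (a t : ℕ) : (windmill a t).head? = some a := by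
  induction t with
  | zero => rfl
  | succ t ih => simp [windmill, ih]

@[simp] theorem getLast?_windmill (a t : ℕ) : (windmill a t).getLast? = some a := by
  cases t <;> simp [windmill]

@[simp] theorem length_windmill (a t : ℕ) : (windmill a t).length = 3 * t + 1 := by
  induction t with
  | zero => rfl
  | succ t ih => simp [windmill, ih]; ring

theorem lt_of_mem_windmill {a N t x : ℕ} (ha : a < N) (ht : 2 * t < N) (hx : x ∈ windmill a t) :
    x < N := by
  induction t with
  | zero => simp_all [windmill]
  | succ t ih =>
    simp only [windmill, List.mem_append, List.mem_cons, List.not_mem_nil, or_false] at hx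
    rcases hx with hx | rfl | rfl | rfl <;> first | exact ih (by omega) hx | omega

theorem isChain_windmill {a t : ℕ} (ha : 2 * t < a) : (windmill a t).IsChain (· ≠ ·) := by
  induction t with
  | zero => simp [windmill]
  | succ t ih =>
    rw [windmill, List.isChain_append]
    refine ⟨ih (by omega), by simp; omega, by simp; omega⟩

theorem adjIn_windmill {a i t : ℕ} (hi : 1 ≤ i) (hit : i ≤ 2 * t) :
    AdjIn (windmill a t) i a := by
  induction t with
  | zero => omega
  | succ t ih =>
    obtain ⟨s, hs⟩ := List.getLast?_eq_some_iff.1 (getLast?_windmill a t)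
    obtain hit | rfl | rfl : i ≤ 2 * t ∨ i = 2 * t + 1 ∨ i = 2 * t + 2 := by omega
    · exact (ih hit).mono (List.prefix_append _ _).isInfix
    · exact (adjIn_of_eq_append (s := s) (t := [2 * t + 2, a]) (by simp [windmill, hs])).symm
    · exact adjIn_of_eq_append (s := s ++ [a, 2 * t + 1]) (t := []) (by simp [windmill, hs])

theorem Nat.choose_two_two_mul_add_one (m : ℕ) : (2 * m + 1).choose 2 = m * (2 * m + 1) := by
  rw [Nat.choose_two_right, Nat.add_sub_cancel, mul_left_comm, Nat.mul_div_cancel_left _ two_pos,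
    mul_comm]

/-- An Euler tour of `K_{2m+1}` from `0` to `0`: with `a = 2m + 1` and `b = 2m + 2`, the next
one appends `a, b, 1, a, 2, b, …, 2m - 1, a, 2m, b, 0`, which uses each edge of `K_{2m+3}` at `a`
or `b` exactly once. -/
def eulerTour : ℕ → List ℕ
  | 0 => [0]
  | m + 1 => eulerTour m ++ (2 * m + 1) :: zigzag (2 * m + 1) (2 * m + 2) m ++ [0]

@[simp] theorem getLast?_eulerTour (m : ℕ) : (eulerTour m).getLast? = some 0 := by
  cases m
  · rfl
  · exact List.getLast?_concat

@[simp] theorem length_eulerTour (m : ℕ) : (eulerTour m).length = (2 * m + 1).choose 2 + 1 := by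
  induction m with
  | zero => rfl
  | succ m ih =>
    simp only [eulerTour, List.length_append, List.length_cons, List.length_nil, length_zigzag, ih,
      Nat.choose_two_two_mul_add_one]
    ring

theorem isCompleteProperList_eulerTour (m : ℕ) :
    IsCompleteProperList (2 * m + 1) (eulerTour m) := by
  induction m with
  | zero => exact ⟨by simp [eulerTour], by simp [eulerTour], by omega⟩
  | succ m ih =>
    obtain ⟨T, hT⟩ := List.getLast?_eq_some_iff.1 (getLast?_eulerTour m)
    obtain ⟨s, hs⟩ := List.getLast?_eq_some_iff.1 (getLast?_zigzag (2 * m + 1) (2 * m + 2) m)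
    obtain ⟨r, hr⟩ := List.head?_eq_some_iff.1 (head?_zigzag (2 * m + 1) (2 * m + 2) m)
    have hpre : eulerTour m <:+: eulerTour (m + 1) :=
      ⟨[], (2 * m + 1) :: zigzag (2 * m + 1) (2 * m + 2) m ++ [0], by simp [eulerTour]⟩
    have hZ : zigzag (2 * m + 1) (2 * m + 2) m <:+: eulerTour (m + 1) :=
      ⟨eulerTour m ++ [2 * m + 1], [0], by simp [eulerTour]⟩
    refine ⟨?_, ?_, ?_⟩
    · simp only [eulerTour, List.mem_append, List.mem_cons, List.not_mem_nil, or_false]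
      rintro x ((hx | rfl | hx) | rfl)
      · exact (ih.lt x hx).trans (by omega)
      · omega
      · exact lt_of_mem_zigzag (by omega) (by omega) (by omega) hx
      · omega
    · simp [eulerTour, List.isChain_append, List.isChain_cons, ih.isChain_ne, isChain_zigzag]
    · intro i j hij hj
      obtain hj | rfl | rfl : j < 2 * m + 1 ∨ j = 2 * m + 1 ∨ j = 2 * m + 2 := by omega
      · exact (ih.adjIn i j hij hj).mono hpre
      · obtain rfl | hi := i.eq_zero_or_pos
        · exact adjIn_of_eq_append (s := T) (t := zigzag (2 * m + 1) (2 * m + 2) m ++ [0])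
            (by simp [eulerTour, hT])
        · exact (adjIn_zigzag hi (by omega)).1.mono hZ
      · obtain rfl | hi | rfl : i = 0 ∨ (0 < i ∧ i < 2 * m + 1) ∨ i = 2 * m + 1 := by omega
        · exact (adjIn_of_eq_append (s := eulerTour m ++ (2 * m + 1) :: s) (t := [])
            (by simp [eulerTour, hs])).symm
        · exact (adjIn_zigzag hi.1 (by omega)).2.mono hZ
        · exact adjIn_of_eq_append (s := eulerTour m) (t := r ++ [0]) (by simp [eulerTour, hr])

theorem isCompleteProperList_eulerTour_append_windmill (m : ℕ) :
    IsCompleteProperList (2 * m + 2) (eulerTour m ++ windmill (2 * m + 1) m) := by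
  have ih := isCompleteProperList_eulerTour m
  obtain ⟨T, hT⟩ := List.getLast?_eq_some_iff.1 (getLast?_eulerTour m)
  obtain ⟨r, hr⟩ := List.head?_eq_some_iff.1 (head?_windmill (2 * m + 1) m)
  refine ⟨?_, ?_, ?_⟩
  · simp only [List.mem_append]
    rintro x (hx | hx)
    · exact (ih.lt x hx).trans (by omega)
    · exact lt_of_mem_windmill (by omega) (by omega) hx
  · simp [List.isChain_append, ih.isChain_ne, isChain_windmill]
  · intro i j hij hj
    obtain hj | rfl : j < 2 * m + 1 ∨ j = 2 * m + 1 := by omega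
    · exact (ih.adjIn i j hij hj).mono (List.prefix_append _ _).isInfix
    obtain rfl | hi := i.eq_zero_or_pos
    · exact adjIn_of_eq_append (s := T) (t := r) (by simp [hT, hr])
    · exact (adjIn_windmill hi (by omega)).mono (List.suffix_append _ _).isInfix

theorem length_eulerTour_append_windmill (m : ℕ) :
    (eulerTour m ++ windmill (2 * m + 1) m).length = (2 * m + 2) * (m + 1) := by
  rw [List.length_append, length_eulerTour, length_windmill, Nat.choose_two_two_mul_add_one]
  ring

theorem exists_isCompleteProperList_length_eq {q n : ℕ} (hq : 2 ≤ q) (h₁ : q.choose 2 ≤ n)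
    (h₂ : q * ((q - 1) ⌈/⌉ 2) ≤ n + 1) :
    ∃ l, IsCompleteProperList q l ∧ l.length = n + 1 := by
  suffices ∃ l, IsCompleteProperList q l ∧ l.length ≤ n + 1 by
    obtain ⟨l, hl, hlen⟩ := this
    exact hl.exists_length_eq hq hlen
  obtain ⟨m, rfl | rfl⟩ : ∃ m, q = 2 * m + 1 ∨ q = 2 * m + 2 := by
    obtain ⟨k, rfl | rfl⟩ := Nat.even_or_odd' q
    exacts [⟨k - 1, by omega⟩, ⟨k, by omega⟩]
  · exact ⟨eulerTour m, isCompleteProperList_eulerTour m, by simpa using h₁⟩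
  · have hceil : (2 * m + 2 - 1) ⌈/⌉ 2 = m + 1 := by rw [Nat.ceilDiv_eq_add_pred_div]; omega
    refine ⟨_, isCompleteProperList_eulerTour_append_windmill m, ?_⟩
    rwa [length_eulerTour_append_windmill, ← hceil]

/-- For `n ≥ 2`, if `q` is the maximal integer with `C(q,2) ≤ n` and
`q·⌈(q−1)/2⌉ ≤ n + 1`, then `Ψ(P_n) = q`. -/
theorem achromatic_path (n : ℕ) (hn : 2 ≤ n) (q : ℕ)
    (hq : q.choose 2 ≤ n ∧ q * ((q - 1) ⌈/⌉ 2) ≤ n + 1)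
    (hmax : ∀ q' : ℕ, q'.choose 2 ≤ n ∧ q' * ((q' - 1) ⌈/⌉ 2) ≤ n + 1 → q' ≤ q) :
    achromaticNumber (pathGraph n) = q := by
  have hq₂ : 2 ≤ q := hmax 2 ⟨by simp; omega, by rw [Nat.ceilDiv_eq_add_pred_div]; omega⟩
  obtain ⟨l, hl, hlen⟩ := exists_isCompleteProperList_length_eq hq₂ hq.1 hq.2
  refine IsGreatest.csSup_eq ⟨hl.exists_isCompleteProperColoring hlen, ?_⟩
  rintro k ⟨c, hc, -⟩
  refine hmax k ⟨hc.choose_two_le_card_edgeFinset.trans (card_edgeFinset_pathGraph_le n), ?_⟩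
  simpa using hc.mul_ceilDiv_le_card (degree_pathGraph_le n)
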